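/- In the extended broadcast protocol, under the same assumptions (PBB validity and agreement, honest-majority committee except with negligible probability, and the committee-capture bound Pr[|A ∩ C| >= t'+1] <= epsilon for all |A| <= t), the protocol satisfies agreement: at the end, all honest receivers output the same value (possibly ⊥), even if the sender is Byzantine and the adversary adaptively corrupts up to t parties after seeing the committee. -/
import Mathlib


/-- Agreement of the extended broadcast channel: even with a Byzantine sender, all
honest receivers output the same value (possibly none), assuming PBB agreement (a common
final bit), sound honest votes, an honest-majority committee, collision-free hashing,
and the DDN guarantee that a block registered by an honest holder is retrievable. -/
theorem stmt16 (n : ℕ) (V D : Type) [DecidableEq D] (Hash : V → D)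
    (hHash : Function.Injective Hash)
    (H K : Finset (Fin n)) (bid : D)
    (received : Fin n → Option V) (vote : Fin n → Bool)
    (retrieve : Option V) (final : Bool) (out : Fin n → Option V)
    -- honest committee members vote 1 only if they hold a value matching the digest
    (hvotesound : ∀ k ∈ K ∩ H, vote k = true → ∃ u, received k = some u ∧ Hash u = bid)
    -- honest-majority committee
    (hmaj : K.card < 2 * (K ∩ H).card)
    -- PBB agreement: the common final bit is 1 iff a strict majority of votes endorse
    (hfinal : final = true ↔ K.card < 2 * (K.filter (fun k => vote k = true)).card)
    -- DDN guarantee: an honest holder of a matching value registers it and it is retrievable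
    (hret : ∀ i ∈ H, ∀ u, received i = some u → Hash u = bid → retrieve = some u)
    -- output rule of honest receivers
    (hout : ∀ i ∈ H, out i =
      if final = true then
        (match received i with
          | some u => if Hash u = bid then some u else retrieve
          | none => retrieve)
      else none) :
    ∀ i ∈ H, ∀ j ∈ H, out i = out j := by
  have key : ∀ i ∈ H, out i = if final = true then retrieve else none := by
    intro i hi
    rw [hout i hi]
    by_cases hf : final = true
    · simp only [hf, if_true]
      -- there exists an honest committee voter
      have hvoters : K.card < 2 * (K.filter (fun k => vote k = true)).card := hfinal.mp hf
      have hne : ((K ∩ H) ∩ K.filter (fun k => vote k = true)).Nonempty := by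
        by_contra hdisj
        rw [Finset.not_nonempty_iff_eq_empty] at hdisj
        have hdis : Disjoint (K ∩ H) (K.filter (fun k => vote k = true)) :=
          Finset.disjoint_iff_inter_eq_empty.mpr hdisj
        have hsub : (K ∩ H) ∪ K.filter (fun k => vote k = true) ⊆ K := by
          intro x hx
          rcases Finset.mem_union.mp hx with h1 | h1
          · exact (Finset.mem_inter.mp h1).1
          · exact (Finset.mem_filter.mp h1).1
        have := Finset.card_le_card hsub
        rw [Finset.card_union_of_disjoint hdis] at this
        omega
      obtain ⟨k, hk⟩ := hne
      rw [Finset.mem_inter] at hk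
      obtain ⟨hkKH, hkv⟩ := hk
      have hkvote : vote k = true := (Finset.mem_filter.mp hkv).2
      obtain ⟨u, hku, hkb⟩ := hvotesound k hkKH hkvote
      have hretr : retrieve = some u :=
        hret k (Finset.mem_inter.mp hkKH).2 u hku hkb
      cases hri : received i with
      | none => rfl
      | some w =>
        by_cases hw : Hash w = bid
        · simp only [hw, if_true]
          exact (hret i hi w hri hw).symm
        · simp [hw]
    · simp [hf]
  intro i hi j hj
  rw [key i hi, key j hj]
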